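/- arXiv:2207.03369 — 2 statements merged into one kernel-verified Lean document; each statement's English description precedes it below -/
import Mathlib

section
/- Let 𝒩 → ℰ →ʲ 𝒢 be a groupoid extension, k a normalized section of j, and (L,σ) the associated factor system. Then the map φ: 𝒩 ×_(L,σ) 𝒢 → ℰ, φ(n,x) = n·k(x), is a groupoid isomorphism satisfying j∘φ(n,x) = x and φ(n, p(n)) = n; i.e., 𝒩 ×_(L,σ) 𝒢 and ℰ are equivalent extensions of 𝒢 by 𝒩. -/
/-!
An arrow `a` of `ℰ` factors as `a = n · k(j a)` with `n = a · k(j a)⁻¹` in the kernel, and for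
`n` in the kernel at `r x` one has `j (n · k x) = x`, so `x` and then `n` are recovered from
`n · k x`: this is the bijectivity of `φ`. Multiplicativity is the groupoid identity
`n (k x m (k x)⁻¹) (k x k y k(xy)⁻¹) k(xy) = (n k x)(m k y)`, where everything telescopes; since
the multiplication of `Gpd` is total, the work lies in checking composability at each step.
-/

/-- A groupoid over a unit space `U`, with a total (junk-valued outside composables)
multiplication. `e : U → G` is the inclusion of units. -/
structure Gpd (G U : Type) where
  s : G → U
  r : G → U
  e : U → G
  mul : G → G → G
  inv : G → G
  s_e : ∀ u, s (e u) = u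
  r_e : ∀ u, r (e u) = u
  e_mul : ∀ x, mul (e (r x)) x = x
  mul_e : ∀ x, mul x (e (s x)) = x
  s_inv : ∀ x, s (inv x) = r x
  r_inv : ∀ x, r (inv x) = s x
  inv_mul : ∀ x, mul (inv x) x = e (s x)
  mul_inv : ∀ x, mul x (inv x) = e (r x)
  r_mul : ∀ x y, s x = r y → r (mul x y) = r x
  s_mul : ∀ x y, s x = r y → s (mul x y) = s y
  assoc : ∀ x y z, s x = r y → s y = r z → mul (mul x y) z = mul x (mul y z)

/-- A group bundle over `U`: a total space `N` with projection `p`, each fiber being a group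
(operations are total, with group laws holding fiberwise). -/
structure GrpBundle (N U : Type) where
  p : N → U
  one : U → N
  mul : N → N → N
  inv : N → N
  p_one : ∀ u, p (one u) = u
  p_mul : ∀ n m, p n = p m → p (mul n m) = p n
  p_inv : ∀ n, p (inv n) = p n
  one_mul : ∀ n, mul (one (p n)) n = n
  mul_one : ∀ n, mul n (one (p n)) = n
  inv_mul : ∀ n, mul (inv n) n = one (p n)
  mul_inv : ∀ n, mul n (inv n) = one (p n)
  assoc : ∀ a b c, p a = p b → p b = p c → mul (mul a b) c = mul a (mul b c)

/-- A groupoid extension `𝒩 → ℰ → 𝒢`: a surjective homomorphism `j : E → G` over the common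
unit space `U`, inducing the identity on units.  The kernel (the group bundle `𝒩`) is the set
of elements of `E` mapped by `j` to a unit. -/
structure GpdExt {G U E : Type} (𝒢 : Gpd G U) (ℰ : Gpd E U) where
  j : E → G
  j_surj : Function.Surjective j
  j_mul : ∀ x y, ℰ.s x = ℰ.r y → j (ℰ.mul x y) = 𝒢.mul (j x) (j y)
  j_inv : ∀ x, j (ℰ.inv x) = 𝒢.inv (j x)
  j_e : ∀ u, j (ℰ.e u) = 𝒢.e u
  j_s : ∀ x, 𝒢.s (j x) = ℰ.s x
  j_r : ∀ x, 𝒢.r (j x) = ℰ.r x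

/-- Membership in the kernel `𝒩 = ker j`. -/
def GpdExt.inKer {G U E : Type} {𝒢 : Gpd G U} {ℰ : Gpd E U} (ext : GpdExt 𝒢 ℰ) (a : E) : Prop :=
  ∃ u, ext.j a = 𝒢.e u

namespace Gpd

variable {G U : Type} (𝒢 : Gpd G U) {a b c d : G}

theorem mul_inv_mul_cancel (h : 𝒢.s a = 𝒢.s b) : 𝒢.mul (𝒢.mul a (𝒢.inv b)) b = a := by
  rw [𝒢.assoc _ _ _ (by rw [𝒢.r_inv, h]) (𝒢.s_inv b), 𝒢.inv_mul, ← h, 𝒢.mul_e]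

theorem mul_mul_inv_cancel (h : 𝒢.s a = 𝒢.r b) : 𝒢.mul (𝒢.mul a b) (𝒢.inv b) = a := by
  rw [𝒢.assoc _ _ _ h (𝒢.r_inv b).symm, 𝒢.mul_inv, ← h, 𝒢.mul_e]

theorem s_mul_inv (h : 𝒢.s a = 𝒢.s b) : 𝒢.s (𝒢.mul a (𝒢.inv b)) = 𝒢.r b := by
  rw [𝒢.s_mul _ _ (by rw [𝒢.r_inv, h]), 𝒢.s_inv]

theorem r_mul_inv (h : 𝒢.s a = 𝒢.s b) : 𝒢.r (𝒢.mul a (𝒢.inv b)) = 𝒢.r a :=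
  𝒢.r_mul _ _ (by rw [𝒢.r_inv, h])

theorem mul_mul_mul_inv_mul_cancel (hab : 𝒢.s a = 𝒢.r b) (hbc : 𝒢.s b = 𝒢.s c) :
    𝒢.mul (𝒢.mul a (𝒢.mul b (𝒢.inv c))) c = 𝒢.mul a b := by
  rw [𝒢.assoc _ _ _ (by rw [𝒢.r_mul_inv hbc, hab]) (𝒢.s_mul_inv hbc), 𝒢.mul_inv_mul_cancel hbc]

theorem mul_conj_mul_mul (hab : 𝒢.s a = 𝒢.r b) (hbc : 𝒢.s b = 𝒢.r c) (hc : 𝒢.s c = 𝒢.s b)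
    (hcd : 𝒢.s c = 𝒢.r d) :
    𝒢.mul (𝒢.mul a (𝒢.mul (𝒢.mul b c) (𝒢.inv b))) (𝒢.mul b d) =
      𝒢.mul (𝒢.mul a b) (𝒢.mul c d) := by
  have hbc_s : 𝒢.s (𝒢.mul b c) = 𝒢.s b := by rw [𝒢.s_mul _ _ hbc, hc]
  have hbc_r : 𝒢.r (𝒢.mul b c) = 𝒢.r b := 𝒢.r_mul _ _ hbc
  have hconj_s : 𝒢.s (𝒢.mul (𝒢.mul b c) (𝒢.inv b)) = 𝒢.r b := 𝒢.s_mul_inv hbc_s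
  have hconj_r : 𝒢.r (𝒢.mul (𝒢.mul b c) (𝒢.inv b)) = 𝒢.r b := by
    rw [𝒢.r_mul_inv hbc_s, hbc_r]
  have hbd : 𝒢.s b = 𝒢.r d := hc ▸ hcd
  rw [𝒢.assoc _ _ _ (by rw [hconj_r, hab]) (by rw [hconj_s, 𝒢.r_mul _ _ hbd]),
    ← 𝒢.assoc _ _ _ (by rw [hconj_s]) hbd, 𝒢.mul_inv_mul_cancel hbc_s,
    𝒢.assoc _ _ _ hbc hcd, ← 𝒢.assoc _ _ _ hab (by rw [𝒢.r_mul _ _ hcd, hbc])]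

end Gpd

namespace GpdExt

variable {G U E : Type} {𝒢 : Gpd G U} {ℰ : Gpd E U} (ext : GpdExt 𝒢 ℰ)

theorem inKer.j_eq {n : E} (hn : ext.inKer n) : ext.j n = 𝒢.e (ℰ.s n) := by
  obtain ⟨u, hu⟩ := hn
  rw [hu, ← ext.j_s, hu, 𝒢.s_e]

theorem inKer.r_eq_s {n : E} (hn : ext.inKer n) : ℰ.r n = ℰ.s n := by
  rw [← ext.j_r, hn.j_eq, 𝒢.r_e]

variable {k : G → E} (hk : ∀ x, ext.j (k x) = x)
include hk

theorem s_section (x : G) : ℰ.s (k x) = 𝒢.s x := by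
  rw [← ext.j_s, hk]

theorem r_section (x : G) : ℰ.r (k x) = 𝒢.r x := by
  rw [← ext.j_r, hk]

theorem j_mul_section {n : E} {x : G} (hn : ext.inKer n) (hnx : ℰ.s n = 𝒢.r x) :
    ext.j (ℰ.mul n (k x)) = x := by
  rw [ext.j_mul _ _ (by rw [ext.r_section hk, hnx]), hn.j_eq, hk, hnx, 𝒢.e_mul]

theorem mul_section_injective {n m : E} {x y : G} (hn : ext.inKer n) (hnx : ℰ.s n = 𝒢.r x)
    (hm : ext.inKer m) (hmy : ℰ.s m = 𝒢.r y) (h : ℰ.mul n (k x) = ℰ.mul m (k y)) :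
    n = m ∧ x = y := by
  obtain rfl : x = y := by
    rw [← ext.j_mul_section hk hn hnx, ← ext.j_mul_section hk hm hmy, h]
  refine ⟨?_, rfl⟩
  rw [← ℰ.mul_mul_inv_cancel (a := n) (b := k x) (by rw [ext.r_section hk, hnx]), h,
    ℰ.mul_mul_inv_cancel (by rw [ext.r_section hk, hmy])]

theorem exists_inKer_mul_section (a : E) :
    ∃ n, ext.inKer n ∧ ℰ.s n = 𝒢.r (ext.j a) ∧ ℰ.mul n (k (ext.j a)) = a := by
  have ha : ℰ.s a = ℰ.s (k (ext.j a)) := by rw [ext.s_section hk, ext.j_s]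
  have hker : ext.j (ℰ.mul a (ℰ.inv (k (ext.j a)))) = 𝒢.e (𝒢.r (ext.j a)) := by
    rw [ext.j_mul _ _ (by rw [ℰ.r_inv, ha]), ext.j_inv, hk, 𝒢.mul_inv]
  have hs : ℰ.s (ℰ.mul a (ℰ.inv (k (ext.j a)))) = 𝒢.r (ext.j a) := by
    rw [ℰ.s_mul_inv ha, ext.r_section hk]
  exact ⟨_, ⟨_, hker⟩, hs, ℰ.mul_inv_mul_cancel ha⟩

/-- The factor-system product formula `n L_x(m) σ(x,y) k(xy) = (n k(x)) (m k(y))`. -/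
theorem mul_conj_mul_factor_mul_section {n m : E} {x y : G} (hnx : ℰ.s n = 𝒢.r x)
    (hm : ext.inKer m) (hmy : ℰ.s m = 𝒢.r y) (hxy : 𝒢.s x = 𝒢.r y) :
    ℰ.mul (ℰ.mul (ℰ.mul n (ℰ.mul (ℰ.mul (k x) m) (ℰ.inv (k x))))
        (ℰ.mul (ℰ.mul (k x) (k y)) (ℰ.inv (k (𝒢.mul x y))))) (k (𝒢.mul x y)) =
      ℰ.mul (ℰ.mul n (k x)) (ℰ.mul m (k y)) := by
  have hkxm : ℰ.s (k x) = ℰ.r m := by rw [ext.s_section hk, hm.r_eq_s, hmy, hxy]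
  have hkxy : ℰ.s (k x) = ℰ.r (k y) := by rw [ext.s_section hk, ext.r_section hk, hxy]
  have hm_loop : ℰ.s m = ℰ.s (k x) := by rw [hmy, ext.s_section hk, hxy]
  have hnkx : ℰ.s n = ℰ.r (k x) := by rw [ext.r_section hk, hnx]
  have hnconj : ℰ.s n = ℰ.r (ℰ.mul (ℰ.mul (k x) m) (ℰ.inv (k x))) := by
    rw [ℰ.r_mul_inv (by rw [ℰ.s_mul _ _ hkxm, hm_loop]), ℰ.r_mul _ _ hkxm, hnkx]
  rw [ℰ.mul_mul_mul_inv_mul_cancel (by rw [ℰ.r_mul _ _ hkxy, ℰ.s_mul _ _ hnconj,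
      ℰ.s_mul_inv (by rw [ℰ.s_mul _ _ hkxm, hm_loop]), ext.r_section hk])
      (by rw [ℰ.s_mul _ _ hkxy, ext.s_section hk, ext.s_section hk, 𝒢.s_mul _ _ hxy]),
    ℰ.mul_conj_mul_mul hnkx hkxm hm_loop (by rw [hmy, ext.r_section hk])]

end GpdExt

/-- Let `𝒩 → ℰ → 𝒢` be a groupoid extension, `k` a normalized section of `j`,
and `(L,σ)` the associated factor system (`L_x(n) = k(x) n k(x)⁻¹`,
`σ(x,y) = k(x)k(y)k(xy)⁻¹`).  Then `φ(n,x) = n·k(x)` is a groupoid isomorphism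
`𝒩 ×_(L,σ) 𝒢 → ℰ` with `j(φ(n,x)) = x` and `φ(n, p(n)) = n`; i.e. `𝒩 ×_(L,σ) 𝒢` and `ℰ` are
equivalent extensions of `𝒢` by `𝒩`. -/
theorem stmt5 {G U E : Type} (𝒢 : Gpd G U) (ℰ : Gpd E U) (ext : GpdExt 𝒢 ℰ)
    (k : G → E) (hk : ∀ x, ext.j (k x) = x) (hk0 : ∀ u, k (𝒢.e u) = ℰ.e u)
    (L : G → E → E) (hL : ∀ x n, L x n = ℰ.mul (ℰ.mul (k x) n) (ℰ.inv (k x)))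
    (σ : G → G → E)
    (hσ : ∀ x y, σ x y = ℰ.mul (ℰ.mul (k x) (k y)) (ℰ.inv (k (𝒢.mul x y)))) :
    -- φ is a bijection from 𝒩 ×_(L,σ) 𝒢 onto ℰ
    Function.Bijective
      (fun q : {q : E × G // ext.inKer q.1 ∧ ℰ.s q.1 = 𝒢.r q.2} =>
        ℰ.mul q.1.1 (k q.1.2)) ∧
    -- φ is multiplicative w.r.t. the product (n,x)(m,y) = (n L_x(m) σ(x,y), xy)
    (∀ n x m y, ext.inKer n → ℰ.s n = 𝒢.r x → ext.inKer m → ℰ.s m = 𝒢.r y →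
      𝒢.s x = 𝒢.r y →
      ℰ.mul (ℰ.mul (ℰ.mul n (L x m)) (σ x y)) (k (𝒢.mul x y)) =
        ℰ.mul (ℰ.mul n (k x)) (ℰ.mul m (k y))) ∧
    -- φ commutes with the projections to 𝒢
    (∀ n x, ext.inKer n → ℰ.s n = 𝒢.r x → ext.j (ℰ.mul n (k x)) = x) ∧
    -- φ restricts to the identity on 𝒩
    (∀ n, ext.inKer n → ℰ.mul n (k (𝒢.e (ℰ.s n))) = n) := by
  refine ⟨⟨?_, ?_⟩, ?_, fun n x hn hnx => ext.j_mul_section hk hn hnx, ?_⟩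
  · rintro ⟨⟨n, x⟩, hn, hnx⟩ ⟨⟨m, y⟩, hm, hmy⟩ h
    obtain ⟨rfl, rfl⟩ := ext.mul_section_injective hk hn hnx hm hmy h
    rfl
  · intro a
    obtain ⟨n, hn, hna, hφ⟩ := ext.exists_inKer_mul_section hk a
    exact ⟨⟨(n, ext.j a), hn, hna⟩, hφ⟩
  · intro n x m y _ hnx hm hmy hxy
    rw [hL, hσ]
    exact ext.mul_conj_mul_factor_mul_section hk hnx hm hmy hxy
  · intro n _
    rw [hk0, ℰ.mul_e]
end

section
/- Two factor systems (L,σ), (L',σ') ∈ Z²(𝒢,𝒩) yield equivalent groupoid extensions 𝒩 ×_(L,σ) 𝒢 and 𝒩 ×_(L',σ') 𝒢 of 𝒢 by 𝒩 if and only if there exists h ∈ C¹(𝒢,𝒩) with (L',σ') = h.(L,σ). Moreover, every equivalence of extensions 𝒩 ×_(L,σ) 𝒢 → 𝒩 ×_(L',σ') 𝒢 is of the form (n,x) ↦ (n·h(x), x) for some such h. -/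
/-- A pair `(L, σ)` satisfying all the conditions of a factor system for `(𝒢, 𝒩)` except
possibly the twisted cocycle condition (F2): `L` is a family of fiberwise group isomorphisms
`L x : N_{s x} → N_{r x}`, trivial on units, and `σ : 𝒢⁽²⁾ → 𝒩` is normalized with
`σ (x, y) ∈ N_{r x}`, satisfying the twisted action condition (F1). -/
structure PreFS {G U N : Type} (𝒢 : Gpd G U) (𝒩 : GrpBundle N U) where
  L : G → N → N
  σ : G → G → N
  L_fib : ∀ x n, 𝒩.p n = 𝒢.s x → 𝒩.p (L x n) = 𝒢.r x
  L_mul : ∀ x n m, 𝒩.p n = 𝒢.s x → 𝒩.p m = 𝒢.s x →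
    L x (𝒩.mul n m) = 𝒩.mul (L x n) (L x m)
  L_bij : ∀ x, Set.BijOn (L x) {n | 𝒩.p n = 𝒢.s x} {n | 𝒩.p n = 𝒢.r x}
  L_e : ∀ u n, 𝒩.p n = u → L (𝒢.e u) n = n
  σ_fib : ∀ x y, 𝒢.s x = 𝒢.r y → 𝒩.p (σ x y) = 𝒢.r x
  σ_e_left : ∀ x, σ (𝒢.e (𝒢.r x)) x = 𝒩.one (𝒢.r x)
  σ_e_right : ∀ x, σ x (𝒢.e (𝒢.s x)) = 𝒩.one (𝒢.r x)
  F1 : ∀ x y n, 𝒢.s x = 𝒢.r y → 𝒩.p n = 𝒢.s y →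
    L x (L y n) = 𝒩.mul (𝒩.mul (σ x y) (L (𝒢.mul x y) n)) (𝒩.inv (σ x y))

/-- A factor system `(L, σ)` for `(𝒢, 𝒩)`: conditions (F1) and (F2). -/
structure FS {G U N : Type} (𝒢 : Gpd G U) (𝒩 : GrpBundle N U) extends PreFS 𝒢 𝒩 where
  F2 : ∀ x y z, 𝒢.s x = 𝒢.r y → 𝒢.s y = 𝒢.r z →
    𝒩.mul (σ x y) (σ (𝒢.mul x y) z) = 𝒩.mul (L x (σ y z)) (σ x (𝒢.mul y z))

variable {G U N : Type}

/-- The product `(n,x)(m,y) = (n ⬝ L_x(m) ⬝ σ(x,y), xy)` on `𝒩 ×_(L,σ) 𝒢`. -/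
def pmul (𝒢 : Gpd G U) (𝒩 : GrpBundle N U) (L : G → N → N) (σ : G → G → N)
    (q q' : N × G) : N × G :=
  (𝒩.mul (𝒩.mul q.1 (L q.2 q'.1)) (σ q.2 q'.2), 𝒢.mul q.2 q'.2)

/-- The inverse `(n,x)⁻¹ = (σ(x⁻¹,x)⁻¹ ⬝ L_{x⁻¹}(n⁻¹), x⁻¹)` on `𝒩 ×_(L,σ) 𝒢`. -/
def pinv (𝒢 : Gpd G U) (𝒩 : GrpBundle N U) (L : G → N → N) (σ : G → G → N)
    (q : N × G) : N × G :=
  (𝒩.mul (𝒩.inv (σ (𝒢.inv q.2) q.2)) (L (𝒢.inv q.2) (𝒩.inv q.1)), 𝒢.inv q.2)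

/-- The action of `h ∈ C¹(𝒢,𝒩)` on the `L`-part of a factor system:
`(h.L)_x(n) = h(x) L_x(n) h(x)⁻¹`. -/
def actL {G U N : Type} (𝒩 : GrpBundle N U) (h : G → N) (L : G → N → N) : G → N → N :=
  fun x n => 𝒩.mul (𝒩.mul (h x) (L x n)) (𝒩.inv (h x))

/-- The action of `h ∈ C¹(𝒢,𝒩)` on the `σ`-part of a factor system:
`(h.σ)(x,y) = h(x) L_x(h(y)) σ(x,y) h(xy)⁻¹`. -/
def actS {G U N : Type} (𝒢 : Gpd G U) (𝒩 : GrpBundle N U) (h : G → N)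
    (L : G → N → N) (σ : G → G → N) : G → G → N :=
  fun x y => 𝒩.mul (𝒩.mul (𝒩.mul (h x) (L x (h y))) (σ x y)) (𝒩.inv (h (𝒢.mul x y)))

/-- An equivalence of the groupoid extensions `𝒩 ×_(L',σ') 𝒢 → 𝒩 ×_(L,σ) 𝒢`: a map of valid
pairs which commutes with the projections to `𝒢`, restricts to the identity on `𝒩`, and is
multiplicative. -/
def IsEquivMap {G U N : Type} (𝒢 : Gpd G U) (𝒩 : GrpBundle N U)
    (F F' : FS 𝒢 𝒩) (φ : N × G → N × G) : Prop :=
  (∀ n x, 𝒩.p n = 𝒢.r x →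
      𝒩.p (φ (n, x)).1 = 𝒢.r x ∧ (φ (n, x)).2 = x) ∧
  (∀ n : N, φ (n, 𝒢.e (𝒩.p n)) = (n, 𝒢.e (𝒩.p n))) ∧
  (∀ n x m y, 𝒩.p n = 𝒢.r x → 𝒩.p m = 𝒢.r y → 𝒢.s x = 𝒢.r y →
      φ (pmul 𝒢 𝒩 F'.L F'.σ (n, x) (m, y)) =
        pmul 𝒢 𝒩 F.L F.σ (φ (n, x)) (φ (m, y)))


/-! An equivalence `φ` is determined by `h x := (φ (1, x)).1`: since `(n, x) = (n, 1_{r x}) (1, x)`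
and `φ` fixes `𝒩`, one gets `φ (n, x) = (n h(x), x)`. Comparing first coordinates in
`φ ((1, x) (m, y)) = φ (1, x) φ (m, y)` gives
`L'_x(m) σ'(x,y) h(xy) = h(x) L_x(m h(y)) σ(x,y)` in the fiber over `r x`; taking `y = 1_{s x}`
resp. `m = 1` yields `L' = h.L` resp. `σ' = h.σ`, and conversely these two identities give back
the displayed one, which is exactly the multiplicativity of `(n, x) ↦ (n h(x), x)`. -/

namespace GrpBundle

variable (𝒩 : GrpBundle N U)

abbrev Fib (u : U) : Type := {n : N // 𝒩.p n = u}

variable {𝒩}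

lemma mul_one_of {n : N} {u : U} (hn : 𝒩.p n = u) : 𝒩.mul n (𝒩.one u) = n := by
  subst hn; exact 𝒩.mul_one n

lemma one_mul_of {n : N} {u : U} (hn : 𝒩.p n = u) : 𝒩.mul (𝒩.one u) n = n := by
  subst hn; exact 𝒩.one_mul n

lemma p_mul_of {n m : N} {u : U} (hn : 𝒩.p n = u) (hm : 𝒩.p m = u) : 𝒩.p (𝒩.mul n m) = u :=
  (𝒩.p_mul n m (hn.trans hm.symm)).trans hn

instance (u : U) : Group (𝒩.Fib u) where
  one := ⟨𝒩.one u, 𝒩.p_one u⟩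
  mul a b := ⟨𝒩.mul a.1 b.1, p_mul_of a.2 b.2⟩
  inv a := ⟨𝒩.inv a.1, (𝒩.p_inv a.1).trans a.2⟩
  mul_assoc a b c := Subtype.ext (𝒩.assoc a.1 b.1 c.1 (a.2.trans b.2.symm) (b.2.trans c.2.symm))
  one_mul a := Subtype.ext (one_mul_of a.2)
  mul_one a := Subtype.ext (mul_one_of a.2)
  inv_mul_cancel a := Subtype.ext ((𝒩.inv_mul a.1).trans (congrArg 𝒩.one a.2))

end GrpBundle

namespace PreFS

variable {𝒢 : Gpd G U} {𝒩 : GrpBundle N U} (F : PreFS 𝒢 𝒩)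

def fibHom (x : G) : 𝒩.Fib (𝒢.s x) →* 𝒩.Fib (𝒢.r x) :=
  MonoidHom.mk' (fun n => ⟨F.L x n, F.L_fib x n n.2⟩) fun a b => Subtype.ext (F.L_mul x a b a.2 b.2)

lemma L_one {x : G} {u : U} (hu : 𝒢.s x = u) : F.L x (𝒩.one u) = 𝒩.one (𝒢.r x) := by
  subst hu
  exact congrArg Subtype.val (F.fibHom x).map_one

lemma pmul_e_left {n m : N} {x : G} (hn : 𝒩.p n = 𝒢.r x) (hm : 𝒩.p m = 𝒢.r x) :
    pmul 𝒢 𝒩 F.L F.σ (n, 𝒢.e (𝒢.r x)) (m, x) = (𝒩.mul n m, x) := by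
  have hnm := GrpBundle.p_mul_of hn hm
  simp only [pmul, F.L_e _ m hm, F.σ_e_left, 𝒢.e_mul, GrpBundle.mul_one_of hnm]

end PreFS

section Transform

variable {𝒢 : Gpd G U} {𝒩 : GrpBundle N U}

/-- `(L', σ') = h.(L, σ)` for a cochain `h ∈ C¹(𝒢, 𝒩)`. -/
structure IsTransform (F F' : PreFS 𝒢 𝒩) (h : G → N) : Prop where
  fib : ∀ x, 𝒩.p (h x) = 𝒢.r x
  map_e : ∀ u, h (𝒢.e u) = 𝒩.one u
  L_eq : ∀ x n, 𝒩.p n = 𝒢.s x → F'.L x n = actL 𝒩 h F.L x n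
  σ_eq : ∀ x y, 𝒢.s x = 𝒢.r y → F'.σ x y = actS 𝒢 𝒩 h F.L F.σ x y

lemma isTransform_iff {F F' : PreFS 𝒢 𝒩} {h : G → N} (hfib : ∀ x, 𝒩.p (h x) = 𝒢.r x)
    (hmap_e : ∀ u, h (𝒢.e u) = 𝒩.one u) :
    IsTransform F F' h ↔ ∀ x y m, 𝒢.s x = 𝒢.r y → 𝒩.p m = 𝒢.r y →
      𝒩.mul (𝒩.mul (F'.L x m) (F'.σ x y)) (h (𝒢.mul x y)) =
        𝒩.mul (𝒩.mul (h x) (F.L x (𝒩.mul m (h y)))) (F.σ x y) := by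
  constructor
  · intro hT x y m hxy hm
    have hms : 𝒩.p m = 𝒢.s x := hm.trans hxy.symm
    have hhy : 𝒩.p (h y) = 𝒢.s x := (hfib y).trans hxy.symm
    rw [hT.L_eq x m hms, hT.σ_eq x y hxy, F.L_mul x m (h y) hms hhy]
    let a : 𝒩.Fib (𝒢.r x) := ⟨h x, hfib x⟩
    let b : 𝒩.Fib (𝒢.r x) := ⟨F.L x m, F.L_fib x m hms⟩
    let c : 𝒩.Fib (𝒢.r x) := ⟨F.L x (h y), F.L_fib x _ hhy⟩
    let s : 𝒩.Fib (𝒢.r x) := ⟨F.σ x y, F.σ_fib x y hxy⟩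
    let d : 𝒩.Fib (𝒢.r x) := ⟨h (𝒢.mul x y), (hfib _).trans (𝒢.r_mul x y hxy)⟩
    have : a * b * a⁻¹ * (a * c * s * d⁻¹) * d = a * (b * c) * s := by group
    exact congrArg Subtype.val this
  · intro hkey
    refine ⟨hfib, hmap_e, fun x n hn => ?_, fun x y hxy => ?_⟩
    · have hx := hkey x (𝒢.e (𝒢.s x)) n (𝒢.r_e _).symm (hn.trans (𝒢.r_e _).symm)
      rw [F'.σ_e_right, F.σ_e_right, 𝒢.mul_e, hmap_e, GrpBundle.mul_one_of hn] at hx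
      let a : 𝒩.Fib (𝒢.r x) := ⟨h x, hfib x⟩
      let b : 𝒩.Fib (𝒢.r x) := ⟨F.L x n, F.L_fib x n hn⟩
      let l : 𝒩.Fib (𝒢.r x) := ⟨F'.L x n, F'.L_fib x n hn⟩
      have hx : l * 1 * a = a * b * 1 := Subtype.ext hx
      rw [mul_one, mul_one] at hx
      exact congrArg Subtype.val (eq_mul_inv_of_mul_eq hx)
    · have hxy' := hkey x y (𝒩.one (𝒢.r y)) hxy (𝒩.p_one _)
      rw [F'.L_one hxy, GrpBundle.one_mul_of (hfib y)] at hxy'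
      let a : 𝒩.Fib (𝒢.r x) := ⟨h x, hfib x⟩
      let c : 𝒩.Fib (𝒢.r x) := ⟨F.L x (h y), F.L_fib x _ ((hfib y).trans hxy.symm)⟩
      let s : 𝒩.Fib (𝒢.r x) := ⟨F.σ x y, F.σ_fib x y hxy⟩
      let s' : 𝒩.Fib (𝒢.r x) := ⟨F'.σ x y, F'.σ_fib x y hxy⟩
      let d : 𝒩.Fib (𝒢.r x) := ⟨h (𝒢.mul x y), (hfib _).trans (𝒢.r_mul x y hxy)⟩
      have hxy' : 1 * s' * d = a * c * s := Subtype.ext hxy'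
      rw [one_mul] at hxy'
      exact congrArg Subtype.val (eq_mul_inv_of_mul_eq hxy')

def shift (𝒩 : GrpBundle N U) (h : G → N) (q : N × G) : N × G :=
  (𝒩.mul q.1 (h q.2), q.2)

lemma IsTransform.isEquivMap_shift {F F' : FS 𝒢 𝒩} {h : G → N}
    (hh : IsTransform F.toPreFS F'.toPreFS h) : IsEquivMap 𝒢 𝒩 F F' (shift 𝒩 h) := by
  refine ⟨fun n x hn => ⟨GrpBundle.p_mul_of hn (hh.fib x), rfl⟩, fun n => ?_,
    fun n x m y hn hm hxy => Prod.ext ?_ rfl⟩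
  · simp only [shift, hh.map_e, 𝒩.mul_one]
  · have hms : 𝒩.p m = 𝒢.s x := hm.trans hxy.symm
    have hmhy : 𝒩.p (𝒩.mul m (h y)) = 𝒢.s x := GrpBundle.p_mul_of hms ((hh.fib y).trans hxy.symm)
    let n' : 𝒩.Fib (𝒢.r x) := ⟨n, hn⟩
    let a : 𝒩.Fib (𝒢.r x) := ⟨h x, hh.fib x⟩
    let b : 𝒩.Fib (𝒢.r x) := ⟨F.L x (𝒩.mul m (h y)), F.L_fib x _ hmhy⟩
    let s : 𝒩.Fib (𝒢.r x) := ⟨F.σ x y, F.σ_fib x y hxy⟩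
    let l' : 𝒩.Fib (𝒢.r x) := ⟨F'.L x m, F'.L_fib x m hms⟩
    let s' : 𝒩.Fib (𝒢.r x) := ⟨F'.σ x y, F'.σ_fib x y hxy⟩
    let d : 𝒩.Fib (𝒢.r x) := ⟨h (𝒢.mul x y), (hh.fib _).trans (𝒢.r_mul x y hxy)⟩
    have hkey : l' * s' * d = a * b * s :=
      Subtype.ext ((isTransform_iff hh.fib hh.map_e).1 hh x y m hxy hm)
    have : n' * l' * s' * d = n' * a * b * s := by simp only [mul_assoc] at hkey ⊢; rw [hkey]
    exact congrArg Subtype.val this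

def cochainOf (𝒢 : Gpd G U) (𝒩 : GrpBundle N U) (φ : N × G → N × G) (x : G) : N :=
  (φ (𝒩.one (𝒢.r x), x)).1

namespace IsEquivMap

variable {F F' : FS 𝒢 𝒩} {φ : N × G → N × G} (hφ : IsEquivMap 𝒢 𝒩 F F' φ)
include hφ

lemma cochainOf_fib (x : G) : 𝒩.p (cochainOf 𝒢 𝒩 φ x) = 𝒢.r x :=
  (hφ.1 _ x (𝒩.p_one _)).1

lemma apply_one (x : G) : φ (𝒩.one (𝒢.r x), x) = (cochainOf 𝒢 𝒩 φ x, x) :=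
  Prod.ext rfl (hφ.1 _ x (𝒩.p_one _)).2

lemma cochainOf_e (u : U) : cochainOf 𝒢 𝒩 φ (𝒢.e u) = 𝒩.one u := by
  have hu := hφ.2.1 (𝒩.one u)
  rw [𝒩.p_one] at hu
  rw [cochainOf, 𝒢.r_e, hu]

lemma apply_eq_shift {n : N} {x : G} (hn : 𝒩.p n = 𝒢.r x) :
    φ (n, x) = shift 𝒩 (cochainOf 𝒢 𝒩 φ) (n, x) := by
  have hfix : φ (n, 𝒢.e (𝒢.r x)) = (n, 𝒢.e (𝒢.r x)) := by
    rw [← hn]; exact hφ.2.1 n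
  have hsplit := hφ.2.2 n (𝒢.e (𝒢.r x)) (𝒩.one (𝒢.r x)) x (hn.trans (𝒢.r_e _).symm)
    (𝒩.p_one _) (𝒢.s_e _)
  rw [F'.pmul_e_left hn (𝒩.p_one _), GrpBundle.mul_one_of hn, hfix, hφ.apply_one,
    F.pmul_e_left hn (hφ.cochainOf_fib x)] at hsplit
  exact hsplit

lemma isTransform : IsTransform F.toPreFS F'.toPreFS (cochainOf 𝒢 𝒩 φ) := by
  refine (isTransform_iff hφ.cochainOf_fib hφ.cochainOf_e).2 fun x y m hxy hm => ?_
  have hL' : 𝒩.p (F'.L x m) = 𝒢.r x := F'.L_fib x m (hm.trans hxy.symm)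
  have hprod : 𝒩.p (𝒩.mul (F'.L x m) (F'.σ x y)) = 𝒢.r (𝒢.mul x y) :=
    (GrpBundle.p_mul_of hL' (F'.σ_fib x y hxy)).trans (𝒢.r_mul x y hxy).symm
  have hsplit := hφ.2.2 (𝒩.one (𝒢.r x)) x m y (𝒩.p_one _) hm hxy
  rw [pmul, GrpBundle.one_mul_of hL', hφ.apply_eq_shift hprod, hφ.apply_one,
    hφ.apply_eq_shift hm] at hsplit
  exact congrArg Prod.fst hsplit

end IsEquivMap

end Transform

/-- Two factor systems `(L,σ)`, `(L',σ')` yield equivalent groupoid extensions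
`𝒩 ×_(L,σ) 𝒢` and `𝒩 ×_(L',σ') 𝒢` iff there is `h ∈ C¹(𝒢,𝒩)` with `(L',σ') = h.(L,σ)`;
moreover every equivalence is of the form `(n,x) ↦ (n·h(x), x)` for such an `h`. -/
theorem stmt8 {G U N : Type} (𝒢 : Gpd G U) (𝒩 : GrpBundle N U) (F F' : FS 𝒢 𝒩) :
    ((∃ φ, IsEquivMap 𝒢 𝒩 F F' φ) ↔
      ∃ h : G → N, (∀ x, 𝒩.p (h x) = 𝒢.r x) ∧ (∀ u, h (𝒢.e u) = 𝒩.one u) ∧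
        (∀ x n, 𝒩.p n = 𝒢.s x → F'.L x n = actL 𝒩 h F.L x n) ∧
        (∀ x y, 𝒢.s x = 𝒢.r y → F'.σ x y = actS 𝒢 𝒩 h F.L F.σ x y)) ∧
    (∀ φ, IsEquivMap 𝒢 𝒩 F F' φ →
      ∃ h : G → N, (∀ x, 𝒩.p (h x) = 𝒢.r x) ∧ (∀ u, h (𝒢.e u) = 𝒩.one u) ∧
        (∀ x n, 𝒩.p n = 𝒢.s x → F'.L x n = actL 𝒩 h F.L x n) ∧
        (∀ x y, 𝒢.s x = 𝒢.r y → F'.σ x y = actS 𝒢 𝒩 h F.L F.σ x y) ∧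
        (∀ n x, 𝒩.p n = 𝒢.r x → φ (n, x) = (𝒩.mul n (h x), x))) := by
  refine ⟨⟨fun ⟨_, hφ⟩ => ?_, fun ⟨_, hfib, hmap_e, hL, hσ⟩ =>
    ⟨_, IsTransform.isEquivMap_shift ⟨hfib, hmap_e, hL, hσ⟩⟩⟩, fun _ hφ => ?_⟩
  · obtain ⟨hfib, hmap_e, hL, hσ⟩ := hφ.isTransform
    exact ⟨_, hfib, hmap_e, hL, hσ⟩
  · obtain ⟨hfib, hmap_e, hL, hσ⟩ := hφ.isTransform
    exact ⟨_, hfib, hmap_e, hL, hσ, fun _ _ => hφ.apply_eq_shift⟩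
end
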